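/- Let d ≥ 1, λ ∈ (0,1), and Λ* as in the LDP for the reflected RW_λ (Legendre transform of ln ψ). Then Λ*(x) = 0 if and only if x = ((1−λ)/(d(1+λ)),…,(1−λ)/(d(1+λ))). -/

import Mathlib

/-!
Write `ψ(s) = (1/d) ∑ φ(sᵢ)` with `φ(t) = g(max t s₀)` and `g(t) = (λe^{-t} + e^t)/(1 + λ)`.
As a convex combination of `e^{-t}` and `e^t`, `g(t) ≥ e^{ct}` with `c = (1 - λ)/(1 + λ) ≥ 0`, so
`φ(t) ≥ e^{ct}`, and Jensen gives `ψ(s) ≥ exp ⟨s, x*⟩` for `x* = (c/d, …, c/d)`, i.e. `Λ*(x*) = 0`.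
Conversely, if `Λ*(x) = 0` then `t ↦ t xᵢ - ln ψ(t eᵢ)` is maximal at `t = 0`; since `s₀ < 0`, near
`0` it equals `t xᵢ - ln ((d - 1 + g(t))/d)`, whose derivative at `0` is `xᵢ - c/d`, so Fermat's rule
forces `xᵢ = c/d`.
-/

open scoped Classical in
/-- The function ψ from the LDP for the reflected biased random walk. -/
noncomputable def psi (d : ℕ) (lam : ℝ) (s : Fin d → ℝ) : ℝ :=
  ((Finset.univ.filter (fun i => s i < (1 / 2) * Real.log lam)).card : ℝ) *
      (2 * Real.sqrt lam / (1 + lam)) / d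
    + (1 / (d * (1 + lam))) *
      ∑ i, (lam * Real.exp (-(s i)) + Real.exp (s i)) *
        (if (1 / 2) * Real.log lam ≤ s i then 1 else 0)

open Real Finset

lemma iSup_coe_eq_zero_iff {ι : Type*} {f : ι → ℝ} {i₀ : ι} (hi₀ : f i₀ = 0) :
    (⨆ i, (f i : EReal)) = 0 ↔ ∀ i, f i ≤ 0 := by
  refine ⟨fun h i => ?_, fun h => le_antisymm (iSup_le fun i => ?_) ?_⟩
  · exact_mod_cast h ▸ le_iSup (fun i => (f i : EReal)) i
  · exact_mod_cast h i
  · exact_mod_cast hi₀ ▸ le_iSup (fun i => (f i : EReal)) i₀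

noncomputable def psiCoord (lam t : ℝ) : ℝ :=
  if t < (1 / 2) * log lam then 2 * √lam / (1 + lam)
  else (lam * exp (-t) + exp t) / (1 + lam)

variable {d : ℕ} {lam : ℝ}

lemma psi_eq_sum_psiCoord (s : Fin d → ℝ) :
    psi d lam s = (∑ i, psiCoord lam (s i)) / d := by
  classical
  rw [psi, natCast_card_filter, sum_mul, sum_div, mul_sum, ← sum_add_distrib, sum_div]
  refine sum_congr rfl fun i _ => ?_
  unfold psiCoord
  split_ifs <;> first | linarith | (field_simp; ring)

lemma exp_mul_le_mul_exp_neg_add_exp_div (h0 : 0 ≤ lam) (t : ℝ) :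
    exp ((1 - lam) / (1 + lam) * t) ≤ (lam * exp (-t) + exp t) / (1 + lam) := by
  have hl : 0 < 1 + lam := by linarith
  have hconv := convexOn_exp.2 (Set.mem_univ (-t)) (Set.mem_univ t)
    (div_nonneg h0 hl.le) (one_div_nonneg.2 hl.le) (by field_simp; ring)
  simp only [smul_eq_mul] at hconv
  calc exp ((1 - lam) / (1 + lam) * t) = exp (lam / (1 + lam) * -t + 1 / (1 + lam) * t) := by
        ring_nf
    _ ≤ _ := hconv
    _ = _ := by ring

lemma mul_exp_neg_add_exp_half_log (h0 : 0 < lam) :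
    lam * exp (-((1 / 2) * log lam)) + exp ((1 / 2) * log lam) = 2 * √lam := by
  have hsqrt : exp ((1 / 2) * log lam) = √lam := by
    rw [sqrt_eq_rpow, rpow_def_of_pos h0, mul_comm]
  have hsqrt_pos : 0 < √lam := sqrt_pos.2 h0
  rw [exp_neg, hsqrt]
  field_simp
  rw [sq_sqrt h0.le]
  ring

lemma exp_mul_le_psiCoord (h0 : 0 < lam) (h1 : lam ≤ 1) (t : ℝ) :
    exp ((1 - lam) / (1 + lam) * t) ≤ psiCoord lam t := by
  unfold psiCoord
  split_ifs with ht
  · have hc : 0 ≤ (1 - lam) / (1 + lam) := div_nonneg (by linarith) (by linarith)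
    calc exp ((1 - lam) / (1 + lam) * t)
        ≤ exp ((1 - lam) / (1 + lam) * ((1 / 2) * log lam)) := by gcongr
      _ ≤ _ := exp_mul_le_mul_exp_neg_add_exp_div h0.le _
      _ = _ := by rw [mul_exp_neg_add_exp_half_log h0]
  · exact exp_mul_le_mul_exp_neg_add_exp_div h0.le t

lemma psiCoord_zero (h0 : 0 < lam) (h1 : lam ≤ 1) : psiCoord lam 0 = 1 := by
  have hlog : ¬ (0 : ℝ) < 1 / 2 * log lam := by
    have := log_nonpos h0.le h1
    linarith
  rw [psiCoord, if_neg hlog, neg_zero, exp_zero, mul_one, add_comm, div_self (by linarith)]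

lemma psi_zero (hd : 1 ≤ d) (h0 : 0 < lam) (h1 : lam ≤ 1) : psi d lam 0 = 1 := by
  have hd' : (d : ℝ) ≠ 0 := by positivity
  simp [psi_eq_sum_psiCoord, psiCoord_zero h0 h1, hd']

lemma psi_single (h0 : 0 < lam) (h1 : lam ≤ 1) (i : Fin d) (t : ℝ) :
    psi d lam (Pi.single i t) = (d - 1 + psiCoord lam t) / d := by
  have hterm : ∀ j, psiCoord lam ((Pi.single i t : Fin d → ℝ) j) =
      1 + (Pi.single i (psiCoord lam t - 1) : Fin d → ℝ) j := by
    intro j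
    rcases eq_or_ne j i with rfl | hj
    · simp
    · simp [hj, psiCoord_zero h0 h1]
  simp only [psi_eq_sum_psiCoord, hterm, sum_add_distrib, sum_pi_single', sum_const, card_univ,
    Fintype.card_fin, nsmul_eq_mul, mul_one, mem_univ, if_true]
  ring

lemma exp_mul_sum_le_psi (hd : 1 ≤ d) (h0 : 0 < lam) (h1 : lam ≤ 1) (s : Fin d → ℝ) :
    exp ((1 - lam) / (d * (1 + lam)) * ∑ i, s i) ≤ psi d lam s := by
  have hd' : (0 : ℝ) < d := by positivity
  have hw : ∑ _i : Fin d, (1 : ℝ) / d = 1 := by simp [hd'.ne']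
  have jensen := convexOn_exp.map_sum_le (t := univ) (w := fun _ => (1 : ℝ) / d)
    (p := fun i => (1 - lam) / (1 + lam) * s i) (fun _ _ => by positivity) hw
    (fun _ _ => Set.mem_univ _)
  simp only [smul_eq_mul] at jensen
  rw [psi_eq_sum_psiCoord]
  calc exp ((1 - lam) / (d * (1 + lam)) * ∑ i, s i)
      = exp (∑ i, 1 / d * ((1 - lam) / (1 + lam) * s i)) := by
        rw [mul_sum]; congr 1; refine sum_congr rfl fun i _ => ?_; field_simp
    _ ≤ ∑ i, 1 / d * exp ((1 - lam) / (1 + lam) * s i) := jensen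
    _ ≤ ∑ i, 1 / d * psiCoord lam (s i) := by gcongr; exact exp_mul_le_psiCoord h0 h1 _
    _ = _ := by rw [← mul_sum]; ring

lemma eq_of_forall_sum_mul_le_log_psi (h0 : 0 < lam) (h1 : lam < 1) {x : Fin d → ℝ}
    (H : ∀ s, ∑ j, s j * x j ≤ log (psi d lam s)) (i : Fin d) :
    x i = (1 - lam) / (d * (1 + lam)) := by
  set g : ℝ → ℝ := fun t => (lam * exp (-t) + exp t) / (1 + lam)
  have hd : (0 : ℝ) < d := by exact_mod_cast i.pos
  have hg0 : g 0 = 1 := by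
    simp only [g, neg_zero, exp_zero, mul_one, add_comm lam 1]
    exact div_self (by linarith)
  have hg : HasDerivAt g ((1 - lam) / (1 + lam)) 0 := by
    have := ((((hasDerivAt_neg 0).exp).const_mul lam).add (hasDerivAt_exp 0)).div_const (1 + lam)
    exact this.congr_deriv (by simp; ring)
  set F : ℝ → ℝ := fun t => t * x i - log ((d - 1 + g t) / d)
  have hF : HasDerivAt F (x i - (1 - lam) / (d * (1 + lam))) 0 := by
    have := ((hg.const_add ((d : ℝ) - 1)).div_const (d : ℝ)).log
      (by rw [hg0, sub_add_cancel, div_self hd.ne']; exact one_ne_zero)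
    refine ((hasDerivAt_mul_const (x i)).sub this).congr_deriv ?_
    rw [hg0, sub_add_cancel, div_self hd.ne', div_one, div_div, mul_comm (1 + lam)]
  have hmax : IsLocalMax F 0 := by
    have hs0 : (1 / 2) * log lam < 0 := by
      have := log_neg h0 h1
      linarith
    filter_upwards [Ioi_mem_nhds hs0] with t ht
    have hsingle := H (Pi.single i t)
    rw [psi_single h0 h1.le, psiCoord, if_neg (not_lt.2 ht.le)] at hsingle
    simpa [F, hg0, Pi.single_apply] using hsingle
  linarith [hmax.hasDerivAt_eq_zero hF]

lemma forall_sum_mul_le_log_psi_iff (hd : 1 ≤ d) (h0 : 0 < lam) (h1 : lam < 1) (x : Fin d → ℝ) :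
    (∀ s, ∑ i, s i * x i ≤ log (psi d lam s)) ↔ x = fun _ => (1 - lam) / (d * (1 + lam)) := by
  refine ⟨fun H => funext (eq_of_forall_sum_mul_le_log_psi h0 h1 H), ?_⟩
  rintro rfl s
  have hlower := exp_mul_sum_le_psi hd h0 h1.le s
  rw [le_log_iff_exp_le ((exp_pos _).trans_le hlower), ← sum_mul, mul_comm]
  exact hlower

theorem stmt19 (d : ℕ) (hd : 1 ≤ d) (lam : ℝ) (h0 : 0 < lam) (h1 : lam < 1)
    (x : Fin d → ℝ) :
    (⨆ s : Fin d → ℝ,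
      ((∑ i, s i * x i - Real.log (psi d lam s) : ℝ) : EReal)) = 0 ↔
      x = fun _ => (1 - lam) / (d * (1 + lam)) := by
  rw [iSup_coe_eq_zero_iff (f := fun s => ∑ i, s i * x i - log (psi d lam s)) (i₀ := 0)
    (by simp [psi_zero hd h0 h1.le])]
  simp only [sub_nonpos]
  exact forall_sum_mul_le_log_psi_iff hd h0 h1 x
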